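/- Let (sₙ) be a sequence of i.i.d. Steinhaus random variables on a probability space (Ω,ℙ), and define T : L¹(Ω,ℙ) → c₀ by Tf = (∫ f·sₙ dℙ)ₙ. Then the adjoint map T* : ℓ¹ → L^∞(Ω,ℙ), sending a = (aₙ) to Σₙ aₙ sₙ, is an isometry: ‖Σₙ aₙ sₙ‖_{L^∞} = Σₙ |aₙ| for all a ∈ ℓ¹. -/

import Mathlib

open MeasureTheory ProbabilityTheory

noncomputable def steinhausLaw : Measure ℂ :=
  Measure.map (fun t : ℝ => Complex.exp (2 * Real.pi * t * Complex.I))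
    (volume.restrict (Set.Ioc (0 : ℝ) 1))

def IsSteinhausSeq {Ω : Type*} [MeasurableSpace Ω] (μ : Measure Ω) (s : ℕ → Ω → ℂ) : Prop :=
  (∀ n, Measurable (s n)) ∧ iIndepFun s μ ∧
    ∀ n, Measure.map (s n) μ = steinhausLaw

/-!
Almost surely every `sₙ` has modulus one, so `‖Σ aₙ sₙ‖ ≤ Σ ‖aₙ‖` pointwise. Conversely, on
sequences bounded by one the series `u ↦ Σ aₙ uₙ` is continuous for the product topology, and at
the phases `zₙ = exp (-i arg aₙ)` it equals `Σ ‖aₙ‖`. Every neighbourhood of `z` contains a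
cylinder constraining finitely many coordinates to open sets around the `zₙ`; since the Steinhaus
law charges every open set meeting the unit circle, independence makes `(sₙ)` fall into such a
cylinder with positive probability.
-/

open Complex Filter Topology

theorem Complex.mul_exp_neg_arg_mul_I (w : ℂ) : w * exp (-arg w * I) = ‖w‖ := by
  calc w * exp (-arg w * I) = ‖w‖ * exp (arg w * I) * exp (-arg w * I) := by
        rw [norm_mul_exp_arg_mul_I]
    _ = ‖w‖ := by rw [mul_assoc, ← exp_add]; simp

theorem Complex.exists_mem_Ioc_exp_two_pi_mul_I_eq {z : ℂ} (hz : ‖z‖ = 1) :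
    ∃ t ∈ Set.Ioc (0 : ℝ) 1, exp (2 * Real.pi * t * I) = z := by
  -- parametrise through `-z`, whose argument lies in `(-π, π]`, to land in `(0, 1]`
  refine ⟨arg (-z) / (2 * Real.pi) + 1 / 2, ?_, ?_⟩
  · obtain ⟨hlo, hhi⟩ := arg_mem_Ioc (-z)
    have h2π : 0 < 2 * Real.pi := by positivity
    constructor
    · have : -(1 / 2) < arg (-z) / (2 * Real.pi) := by
        rw [lt_div_iff₀ h2π]; linarith
      linarith
    · have : arg (-z) / (2 * Real.pi) ≤ 1 / 2 := by
        rw [div_le_iff₀ h2π]; linarith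
      linarith
  · have h := norm_mul_exp_arg_mul_I (-z)
    rw [norm_neg, hz, ofReal_one, one_mul] at h
    calc exp (2 * Real.pi * ↑(arg (-z) / (2 * Real.pi) + 1 / 2) * I)
        = exp (arg (-z) * I) * exp (Real.pi * I) := by
          rw [← exp_add]; congr 1; push_cast; field_simp
      _ = z := by rw [h, exp_pi_mul_I]; ring

theorem sphere_subset_support_steinhausLaw : Metric.sphere (0 : ℂ) 1 ⊆ steinhausLaw.support := by
  intro z hz
  rw [mem_sphere_zero_iff_norm] at hz
  rw [Measure.mem_support_iff_forall]
  intro U hU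
  set e : ℝ → ℂ := fun t => exp (2 * Real.pi * t * I)
  have he : Continuous e := by fun_prop
  obtain ⟨t₀, ht₀, he₀⟩ := exists_mem_Ioc_exp_two_pi_mul_I_eq hz
  set W := e ⁻¹' interior U
  have hW : IsOpen W := isOpen_interior.preimage he
  have ht₀W : t₀ ∈ W := by
    simp only [W, Set.mem_preimage, e, he₀]; exact mem_interior_iff_mem_nhds.2 hU
  have ht₀cl : t₀ ∈ closure (Set.Ioo (0 : ℝ) 1) := by
    rw [closure_Ioo zero_ne_one]; exact Set.Ioc_subset_Icc_self ht₀
  calc 0 < volume (W ∩ Set.Ioo 0 1) :=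
        (hW.inter isOpen_Ioo).measure_pos _ (mem_closure_iff.1 ht₀cl W hW ht₀W)
    _ ≤ volume.restrict (Set.Ioc 0 1) W :=
        (measure_mono (Set.inter_subset_inter_right _ Set.Ioo_subset_Ioc_self)).trans
          (Measure.le_restrict_apply _ _)
    _ = steinhausLaw (interior U) :=
        (Measure.map_apply he.measurable isOpen_interior.measurableSet).symm
    _ ≤ steinhausLaw U := measure_mono interior_subset

theorem ae_steinhausLaw_norm_eq_one : ∀ᵐ z ∂steinhausLaw, ‖z‖ = 1 := by
  rw [steinhausLaw, ae_map_iff (by fun_prop) (measurableSet_eq_fun (by fun_prop) (by fun_prop))]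
  exact ae_of_all _ fun t => by simp [norm_exp]

namespace IsSteinhausSeq

variable {Ω : Type*} [MeasurableSpace Ω] {μ : Measure Ω} {s : ℕ → Ω → ℂ}

theorem ae_norm_eq_one (hs : IsSteinhausSeq μ s) : ∀ᵐ ω ∂μ, ∀ n, ‖s n ω‖ = 1 :=
  ae_all_iff.2 fun n => ae_of_ae_map (hs.1 n).aemeasurable (hs.2.2 n ▸ ae_steinhausLaw_norm_eq_one)

theorem measure_preimage_ne_zero_of_mem_nhds (hs : IsSteinhausSeq μ s) {z : ℕ → ℂ}
    (hz : ∀ n, ‖z n‖ = 1) {V : Set (ℕ → ℂ)} (hV : V ∈ 𝓝 z) :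
    μ {ω | (fun n => s n ω) ∈ V} ≠ 0 := by
  rw [nhds_pi, Filter.mem_pi'] at hV
  obtain ⟨I, t, ht, hIt⟩ := hV
  have hpos : ∀ n, μ (s n ⁻¹' interior (t n)) ≠ 0 := fun n => by
    rw [← Measure.map_apply (hs.1 n) isOpen_interior.measurableSet, hs.2.2 n]
    exact ((Measure.mem_support_iff_forall _).1
      (sphere_subset_support_steinhausLaw (mem_sphere_zero_iff_norm.2 (hz n))) _
      (interior_mem_nhds.2 (ht n))).ne'
  refine (measure_pos_of_superset (s := ⋂ n ∈ I, s n ⁻¹' interior (t n))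
    (fun ω hω => hIt fun n hn => interior_subset (Set.mem_iInter₂.1 hω n hn)) ?_).ne'
  rw [hs.2.1.measure_inter_preimage_eq_mul I fun n _ => isOpen_interior.measurableSet]
  exact Finset.prod_ne_zero_iff.2 fun n _ => hpos n

end IsSteinhausSeq

section WeightedSeries

variable {R : Type*} [NormedRing R] {a : ℕ → R}

theorem norm_tsum_mul_le_tsum_norm (ha : Summable fun n => ‖a n‖) {u : ℕ → R}
    (hu : ∀ n, ‖u n‖ ≤ 1) : ‖∑' n, a n * u n‖ ≤ ∑' n, ‖a n‖ :=
  tsum_of_norm_bounded ha.hasSum fun n => (norm_mul_le_of_le le_rfl (hu n)).trans_eq (mul_one _)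

theorem continuousOn_tsum_mul [CompleteSpace R] (ha : Summable fun n => ‖a n‖) :
    ContinuousOn (fun u : ℕ → R => ∑' n, a n * u n) {u | ∀ n, ‖u n‖ ≤ 1} :=
  continuousOn_tsum (fun n => (continuous_const.mul (continuous_apply n)).continuousOn) ha
    fun n _ hu => (norm_mul_le_of_le le_rfl (hu n)).trans_eq (mul_one _)

end WeightedSeries

theorem ofReal_le_eLpNorm_top_of_measure_ne_zero {α E : Type*} [MeasurableSpace α] {μ : Measure α}
    [NormedAddCommGroup E] {f : α → E} {S : ℝ}
    (h : ∀ r < S, μ {x | r < ‖f x‖} ≠ 0) : ENNReal.ofReal S ≤ eLpNorm f ⊤ μ := by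
  rw [eLpNorm_exponent_top]
  refine le_of_forall_lt fun c hc => ?_
  have hfreq := frequently_ae_iff.2 (h _ (ENNReal.toReal_lt_of_lt_ofReal hc))
  obtain ⟨x, hx, hxle⟩ := (hfreq.and_eventually (ae_le_eLpNormEssSup (f := f))).exists
  calc c = ENNReal.ofReal c.toReal := (ENNReal.ofReal_toReal hc.ne_top).symm
    _ < ‖f x‖ₑ := by
      rw [← ofReal_norm]; exact (ENNReal.ofReal_lt_ofReal_iff_of_nonneg ENNReal.toReal_nonneg).2 hx
    _ ≤ eLpNormEssSup f μ := hxle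

theorem stmt2_general {Ω : Type*} [MeasurableSpace Ω] (μ : Measure Ω)
    (s : ℕ → Ω → ℂ) (hs : IsSteinhausSeq μ s)
    (a : ℕ → ℂ) (ha : Summable fun n => ‖a n‖) :
    eLpNorm (fun ω => ∑' n, a n * s n ω) ⊤ μ = ENNReal.ofReal (∑' n, ‖a n‖) := by
  have hbounded : ∀ᵐ ω ∂μ, ∀ n, ‖s n ω‖ ≤ 1 := hs.ae_norm_eq_one.mono fun ω hω n => (hω n).le
  refine le_antisymm ?_ (ofReal_le_eLpNorm_top_of_measure_ne_zero fun r hr => ?_)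
  · rw [eLpNorm_exponent_top]
    refine eLpNormEssSup_le_of_ae_bound ?_
    filter_upwards [hbounded] with ω hω using norm_tsum_mul_le_tsum_norm ha hω
  set z : ℕ → ℂ := fun n => exp (-arg (a n) * I)
  have hz : ∀ n, ‖z n‖ = 1 := fun n => by simp [z, norm_exp]
  have hsum_z : ∑' n, a n * z n = ∑' n, ‖a n‖ := by
    simp only [z, mul_exp_neg_arg_mul_I, ofReal_tsum]
  have hV : {u : ℕ → ℂ | (∀ n, ‖u n‖ ≤ 1) → r < ‖∑' n, a n * u n‖} ∈ 𝓝 z := by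
    have hcont := (continuousOn_tsum_mul ha z fun n => (hz n).le).norm
    refine mem_inf_principal.1 (hcont.eventually_const_lt ?_)
    show r < ‖_‖
    rwa [hsum_z, norm_real, Real.norm_of_nonneg (tsum_nonneg fun n => norm_nonneg _)]
  refine ne_bot_of_le_ne_bot (hs.measure_preimage_ne_zero_of_mem_nhds hz hV) (measure_mono_ae ?_)
  filter_upwards [hbounded] with ω hω hωV using hωV hω

/-- The adjoint `T* : ℓ¹ → L^∞(Ω,μ)`, `a ↦ Σₙ aₙ sₙ`, of the map
`T : L¹ → c₀`, `Tf = (∫ f sₙ)ₙ`, is an isometry: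
`‖Σₙ aₙ sₙ‖_{L^∞} = Σₙ |aₙ|` for every `a ∈ ℓ¹`. -/
theorem stmt2 {Ω : Type*} [MeasurableSpace Ω] (μ : Measure Ω) [IsProbabilityMeasure μ]
    (s : ℕ → Ω → ℂ) (hs : IsSteinhausSeq μ s)
    (a : ℕ → ℂ) (ha : Summable fun n => ‖a n‖) :
    eLpNorm (fun ω => ∑' n, a n * s n ω) ⊤ μ = ENNReal.ofReal (∑' n, ‖a n‖) :=
  stmt2_general μ s hs a ha
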